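/- arXiv:2512.00393 — 5 statements merged into one kernel-verified Lean document; each statement's English description precedes it below -/
import Mathlib

section
/- Let A, B, K, L, C be real matrices as in the separation principle setup. The spectrum of the block matrix [[A, BK], [-LC, A+BK+LC]] equals the union (with multiplicity) of the spectra of A+BK and A+LC. In particular, every eigenvalue of the closed-loop matrix has negative real part if and only if every eigenvalue of A+BK and every eigenvalue of A+LC has negative real part. -/
/-!
Conjugating the closed-loop matrix by the involution `P = [[1, 0], [1, -1]]` (the change of
coordinates from `(x, x̂)` to `(x, x - x̂)`) gives the block upper-triangular matrix
`[[A+BK, -BK], [0, A+LC]]`, whose characteristic polynomial is the product of those of its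
diagonal blocks. Over `ℂ` the spectrum is the root set of the characteristic polynomial, so the
spectrum of the closed loop is the union of the two spectra.
-/

open Matrix Polynomial

namespace Matrix

variable {R : Type*} [CommRing R] {ι : Type*} [Fintype ι] [DecidableEq ι]

theorem charpoly_mul_mul_of_mul_self_eq_one {P : Matrix ι ι R} (hP : P * P = 1)
    (N : Matrix ι ι R) : (P * N * P).charpoly = N.charpoly := by
  rw [mul_assoc, charpoly_mul_comm, mul_assoc, hP, mul_one]

variable {m p : Type*} [Fintype m] [Fintype p]

theorem fromBlocks_closedLoop_conj (A : Matrix ι ι R) (B : Matrix ι m R) (K : Matrix m ι R)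
    (L : Matrix ι p R) (C : Matrix p ι R) :
    fromBlocks 1 0 1 (-1) * fromBlocks A (B * K) (-(L * C)) (A + B * K + L * C) *
        fromBlocks 1 0 1 (-1) =
      fromBlocks (A + B * K) (-(B * K)) 0 (A + L * C) := by
  simp only [fromBlocks_multiply]
  congr 1 <;> noncomm_ring

theorem charpoly_fromBlocks_closedLoop (A : Matrix ι ι R) (B : Matrix ι m R)
    (K : Matrix m ι R) (L : Matrix ι p R) (C : Matrix p ι R) :
    (fromBlocks A (B * K) (-(L * C)) (A + B * K + L * C)).charpoly =
      (A + B * K).charpoly * (A + L * C).charpoly := by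
  have hP : (fromBlocks 1 0 1 (-1) : Matrix (ι ⊕ ι) (ι ⊕ ι) R) * fromBlocks 1 0 1 (-1) = 1 := by
    simp [fromBlocks_multiply, ← fromBlocks_one]
  rw [← charpoly_mul_mul_of_mul_self_eq_one hP, fromBlocks_closedLoop_conj,
    charpoly_fromBlocks_zero₂₁]

theorem spectrum_eq_union_of_charpoly_eq_mul {K : Type*} [Field K] {κ : Type*} [Fintype κ]
    [DecidableEq κ] {M : Matrix κ κ K} {N₁ N₂ : Matrix ι ι K}
    (h : M.charpoly = N₁.charpoly * N₂.charpoly) :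
    spectrum K M = spectrum K N₁ ∪ spectrum K N₂ := by
  ext μ
  simp only [Set.mem_union, mem_spectrum_iff_isRoot_charpoly, h, IsRoot, eval_mul, mul_eq_zero]

end Matrix

/-- Separation principle, spectral version: the characteristic polynomial of the
closed-loop matrix `[[A, BK], [-LC, A+BK+LC]]` factors as the product of those of
`A+BK` and `A+LC` (spectrum equality with multiplicity), and hence all its complex
eigenvalues have negative real part iff all eigenvalues of `A+BK` and of `A+LC` do. -/
theorem stmt_1 {n m p : ℕ}
    (A : Matrix (Fin n) (Fin n) ℝ) (B : Matrix (Fin n) (Fin m) ℝ)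
    (K : Matrix (Fin m) (Fin n) ℝ) (L : Matrix (Fin n) (Fin p) ℝ)
    (C : Matrix (Fin p) (Fin n) ℝ)
    (M : Matrix (Fin n ⊕ Fin n) (Fin n ⊕ Fin n) ℝ)
    (hM : M = fromBlocks A (B * K) (-(L * C)) (A + B * K + L * C)) :
    M.charpoly = (A + B * K).charpoly * (A + L * C).charpoly ∧
    ((∀ μ ∈ spectrum ℂ (M.map (algebraMap ℝ ℂ)), μ.re < 0) ↔
      ((∀ μ ∈ spectrum ℂ ((A + B * K).map (algebraMap ℝ ℂ)), μ.re < 0) ∧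
       (∀ μ ∈ spectrum ℂ ((A + L * C).map (algebraMap ℝ ℂ)), μ.re < 0))) := by
  have hchar : M.charpoly = (A + B * K).charpoly * (A + L * C).charpoly :=
    hM ▸ charpoly_fromBlocks_closedLoop A B K L C
  have hspec : spectrum ℂ (M.map (algebraMap ℝ ℂ)) =
      spectrum ℂ ((A + B * K).map (algebraMap ℝ ℂ)) ∪
        spectrum ℂ ((A + L * C).map (algebraMap ℝ ℂ)) := by
    apply spectrum_eq_union_of_charpoly_eq_mul
    rw [charpoly_map, charpoly_map, charpoly_map, hchar, Polynomial.map_mul]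
  refine ⟨hchar, ?_⟩
  simp only [hspec, Set.mem_union, or_imp, forall_and]
end

section
/- Let L ∈ ℝ^{N×N} be a symmetric positive semidefinite matrix whose kernel is spanned by the all-ones vector 1_N (e.g., the Laplacian of a connected undirected weighted graph). For i = 1,…,N let X_i ∈ ℝ^{n×q_i} satisfy X_iᵀX_i = I_{q_i}, and let D = diag(X_1,…,X_N) ∈ ℝ^{Nn×Σq_i}. Then the matrix Dᵀ(L ⊗ I_n)D is positive definite if and only if ⋂_{i=1}^N Im(X_i) = {0}. -/
/-!
`Dᵀ (L ⊗ Iₙ) D` is positive semidefinite, and its quadratic form vanishes at `x` iff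
`(L ⊗ Iₙ) D x = 0`, i.e. iff `D x = 1 ⊗ c` for some `c ∈ ℝⁿ`, i.e. iff `Xᵢ xᵢ = c` for every
block `i`. Such a `c` lies in every `Im Xᵢ`. If these meet only in `0`, then `c = 0`, and since
each `Xᵢ` is injective (`XᵢᵀXᵢ = I`) also `x = 0`. Conversely a common `c ≠ 0`, written as
`c = Xᵢ uᵢ`, gives a nonzero `x = (uᵢ)ᵢ` on which the form vanishes.
-/

open Matrix Kronecker

namespace Matrix

variable {m n ι R : Type*}

lemma mulVec_injective_of_mul_eq_one [CommSemiring R] [Fintype m] [Fintype n] [DecidableEq n]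
    {A : Matrix m n R} {B : Matrix n m R} (h : B * A = 1) : Function.Injective A.mulVec :=
  fun x y hxy => by simpa only [mulVec_mulVec, h, one_mulVec] using congrArg (B *ᵥ ·) hxy

lemma kronecker_one_mulVec [CommSemiring R] [Fintype m] [Fintype n] [DecidableEq n]
    (A : Matrix m m R) (z : m × n → R) :
    (A ⊗ₖ (1 : Matrix n n R)) *ᵥ z = fun p => (A *ᵥ fun j => z (j, p.2)) p.1 := by
  funext p
  simp only [mulVec, dotProduct, Fintype.sum_prod_type, kroneckerMap_apply, one_apply,
    mul_ite, mul_one, mul_zero, ite_mul, zero_mul, Finset.sum_ite_eq, Finset.mem_univ, if_true]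

lemma kronecker_one_mulVec_eq_zero_iff [CommSemiring R] [Fintype m] [Fintype n] [DecidableEq n]
    {A : Matrix m m R} (hA : ∀ v : m → R, A *ᵥ v = 0 ↔ ∃ c : R, v = fun _ => c)
    (z : m × n → R) :
    (A ⊗ₖ (1 : Matrix n n R)) *ᵥ z = 0 ↔ ∃ c : n → R, ∀ i a, z (i, a) = c a := by
  rw [kronecker_one_mulVec]
  constructor
  · intro h
    have hcol (a : n) : ∃ c : R, (fun j => z (j, a)) = fun _ => c :=
      (hA _).mp (funext fun i => congrFun h (i, a))
    choose c hc using hcol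
    exact ⟨c, fun i a => congrFun (hc a) i⟩
  · rintro ⟨c, hc⟩
    funext p
    have hconst : (fun j => z (j, p.2)) = fun _ => c p.2 := funext fun j => hc j p.2
    rw [hconst, (hA _).mpr ⟨_, rfl⟩]
    rfl

lemma mulVec_eq_of_blockDiagonal_apply [CommSemiring R] [Fintype m] [Fintype ι]
    [DecidableEq ι] {q : ι → ℕ} {X : (i : ι) → Matrix m (Fin (q i)) R}
    {D : Matrix (ι × m) ((i : ι) × Fin (q i)) R}
    (hD : ∀ (pr : ι × m) (s : (i : ι) × Fin (q i)),
      D pr s = if h : s.1 = pr.1 then X pr.1 pr.2 (Fin.cast (congrArg q h) s.2) else 0)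
    (y : ((i : ι) × Fin (q i)) → R) :
    D *ᵥ y = fun p => (X p.1 *ᵥ fun k => y ⟨p.1, k⟩) p.2 := by
  funext p
  simp only [mulVec, dotProduct, hD]
  rw [← Finset.univ_sigma_univ, Finset.sum_sigma, Finset.sum_eq_single p.1]
  · simp
  · intro i _ hi
    simp [dif_neg hi]
  · simp

open scoped ComplexOrder in
lemma PosSemidef.posDef_conjTranspose_mul_mul_iff {𝕜 : Type*} [RCLike 𝕜] [Fintype m]
    [Fintype n] {A : Matrix n n 𝕜} (hA : A.PosSemidef) (B : Matrix n m 𝕜) :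
    (Bᴴ * A * B).PosDef ↔ ∀ x, A *ᵥ (B *ᵥ x) = 0 → x = 0 := by
  have hquad (x : m → 𝕜) : star x ⬝ᵥ (Bᴴ * A * B) *ᵥ x = star (B *ᵥ x) ⬝ᵥ A *ᵥ (B *ᵥ x) := by
    rw [star_mulVec, ← mulVec_mulVec, ← mulVec_mulVec, dotProduct_mulVec, vecMul_conjTranspose,
      star_star]
  have hBAB := hA.conjTranspose_mul_mul_same B
  constructor
  · intro hpos x hx
    by_contra hx0
    have := hpos.dotProduct_mulVec_pos hx0
    rw [hquad, (hA.dotProduct_mulVec_zero_iff _).mpr hx] at this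
    exact lt_irrefl _ this
  · intro hker
    refine .of_dotProduct_mulVec_pos hBAB.isHermitian fun x hx => ?_
    refine lt_of_le_of_ne (hBAB.dotProduct_mulVec_nonneg x) fun h => hx (hker x ?_)
    rw [← hA.dotProduct_mulVec_zero_iff, ← hquad, h]

lemma iInter_range_mulVec_eq_singleton_zero_iff [CommSemiring R] [Nonempty ι] {κ : ι → Type*}
    [∀ i, Fintype (κ i)] {X : (i : ι) → Matrix m (κ i) R}
    (hX : ∀ i, Function.Injective (X i).mulVec) :
    (⋂ i, Set.range (X i).mulVec) = {0} ↔
      ∀ y : ((i : ι) × κ i) → R, (∃ c, ∀ i, X i *ᵥ (fun k => y ⟨i, k⟩) = c) → y = 0 := by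
  constructor
  · rintro hInt y ⟨c, hc⟩
    have hc0 : c = 0 := by
      have : c ∈ ⋂ i, Set.range (X i).mulVec := Set.mem_iInter.mpr fun i => ⟨_, hc i⟩
      rwa [hInt] at this
    funext s
    have hblock : (fun k => y ⟨s.1, k⟩) = 0 := hX s.1 (by rw [hc s.1, hc0, mulVec_zero])
    exact congrFun hblock s.2
  · intro hy
    refine Set.eq_singleton_iff_unique_mem.mpr
      ⟨Set.mem_iInter.mpr fun i => ⟨0, mulVec_zero _⟩, fun w hw => ?_⟩
    choose u hu using Set.mem_iInter.mp hw
    have hu0 : (fun s : (i : ι) × κ i => u s.1 s.2) = 0 := hy _ ⟨w, hu⟩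
    obtain ⟨i⟩ := ‹Nonempty ι›
    have : u i = 0 := funext fun k => congrFun hu0 ⟨i, k⟩
    rw [← hu i, this, mulVec_zero]

end Matrix

theorem stmt_2_general {N n : ℕ} (hN : 0 < N) (q : Fin N → ℕ)
    (L : Matrix (Fin N) (Fin N) ℝ) (hLpsd : L.PosSemidef)
    (hker : ∀ v : Fin N → ℝ, L.mulVec v = 0 ↔ ∃ c : ℝ, v = fun _ => c)
    (X : (i : Fin N) → Matrix (Fin n) (Fin (q i)) ℝ)
    (hX : ∀ i, (X i)ᵀ * X i = 1)
    (D : Matrix (Fin N × Fin n) ((i : Fin N) × Fin (q i)) ℝ)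
    (hD : ∀ (pr : Fin N × Fin n) (s : (i : Fin N) × Fin (q i)),
      D pr s = if h : s.1 = pr.1 then X pr.1 pr.2 (Fin.cast (congrArg q h) s.2) else 0) :
    (Dᵀ * (L ⊗ₖ (1 : Matrix (Fin n) (Fin n) ℝ)) * D).PosDef ↔
      (⋂ i, Set.range (X i).mulVec) = {0} := by
  have : Nonempty (Fin N) := ⟨⟨0, hN⟩⟩
  have hK : (L ⊗ₖ (1 : Matrix (Fin n) (Fin n) ℝ)).PosSemidef := hLpsd.kronecker .one
  rw [← conjTranspose_eq_transpose_of_trivial, hK.posDef_conjTranspose_mul_mul_iff,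
    iInter_range_mulVec_eq_singleton_zero_iff fun i => mulVec_injective_of_mul_eq_one (hX i)]
  refine forall_congr' fun y => imp_congr_left ?_
  rw [kronecker_one_mulVec_eq_zero_iff hker, mulVec_eq_of_blockDiagonal_apply hD]
  simp only [funext_iff]

/-- Lemma 1 of the paper: for `L` symmetric PSD with kernel spanned by the all-ones
vector (e.g. the Laplacian of a connected undirected graph) and `X i` with orthonormal
columns, the matrix `Dᵀ (L ⊗ Iₙ) D` with `D = diag(X₁,…,X_N)` is positive definite
iff the column spaces of the `X i` intersect trivially. -/
theorem stmt_2 {N n : ℕ} (hN : 0 < N) (q : Fin N → ℕ)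
    (L : Matrix (Fin N) (Fin N) ℝ) (hLsymm : L.IsSymm) (hLpsd : L.PosSemidef)
    (hker : ∀ v : Fin N → ℝ, L.mulVec v = 0 ↔ ∃ c : ℝ, v = fun _ => c)
    (X : (i : Fin N) → Matrix (Fin n) (Fin (q i)) ℝ)
    (hX : ∀ i, (X i)ᵀ * X i = 1)
    (D : Matrix (Fin N × Fin n) ((i : Fin N) × Fin (q i)) ℝ)
    (hD : ∀ (pr : Fin N × Fin n) (s : (i : Fin N) × Fin (q i)),
      D pr s = if h : s.1 = pr.1 then X pr.1 pr.2 (Fin.cast (congrArg q h) s.2) else 0) :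
    (Dᵀ * (L ⊗ₖ (1 : Matrix (Fin n) (Fin n) ℝ)) * D).PosDef ↔
      (⋂ i, Set.range (X i).mulVec) = {0} :=
  stmt_2_general hN q L hLpsd hker X hX D hD
end

section
/- Let L ∈ ℝ^{N×N} be symmetric positive semidefinite with kernel spanned by 1_N, and let X_i ∈ ℝ^{n×q_i} with X_iᵀX_i = I_{q_i} for each i. If there exists a nonzero vector w ∈ ⋂_{i=1}^N Im(X_i), then Dᵀ(L ⊗ I_n)D is singular, where D = diag(X_1,…,X_N); specifically, the vector obtained by stacking the coordinate vectors c_i with X_i c_i = w lies in the kernel of Dᵀ(L ⊗ I_n)D. -/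
open Matrix Kronecker

/-! Blockwise, `D v` has `i`-th block `X i (c i) = w`, i.e. `D v = 1_N ⊗ w`; hence
`(L ⊗ I) D v = (L 1_N) ⊗ w = 0`. And `v ≠ 0` because each block `c i` is mapped to `w ≠ 0`. -/

theorem Matrix.kronecker_mulVec_mul {R l m n p : Type*} [CommSemiring R] [Fintype m] [Fintype n]
    (A : Matrix l m R) (B : Matrix p n R) (x : m → R) (y : n → R) :
    (A ⊗ₖ B) *ᵥ (fun ij => x ij.1 * y ij.2) = fun ij => (A *ᵥ x) ij.1 * (B *ᵥ y) ij.2 := by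
  ext ⟨i, j⟩
  simp only [mulVec, dotProduct, kroneckerMap_apply, Fintype.sum_prod_type, Finset.sum_mul_sum]
  exact Finset.sum_congr rfl fun _ _ => Finset.sum_congr rfl fun _ _ => by ring

theorem Matrix.mulVec_eq_of_blockDiagonal_apply_s3 {R ι m : Type*} [CommSemiring R] [Fintype ι]
    [DecidableEq ι] (q : ι → ℕ) (X : (i : ι) → Matrix m (Fin (q i)) R)
    (D : Matrix (ι × m) ((i : ι) × Fin (q i)) R)
    (hD : ∀ (pr : ι × m) (s : (i : ι) × Fin (q i)),
      D pr s = if h : s.1 = pr.1 then X pr.1 pr.2 (Fin.cast (congrArg q h) s.2) else 0)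
    (v : ((i : ι) × Fin (q i)) → R) :
    D *ᵥ v = fun p => (X p.1 *ᵥ fun k => v ⟨p.1, k⟩) p.2 := by
  ext ⟨i, a⟩
  simp only [mulVec, dotProduct, ← Finset.univ_sigma_univ, Finset.sum_sigma, hD]
  rw [Finset.sum_eq_single i]
  · simp
  · intro j _ hj
    simp [hj]
  · simp

theorem stmt_3_general {N n : ℕ} (hN : 0 < N) (q : Fin N → ℕ)
    (L : Matrix (Fin N) (Fin N) ℝ)
    (hker : ∀ v : Fin N → ℝ, L.mulVec v = 0 ↔ ∃ c : ℝ, v = fun _ => c)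
    (X : (i : Fin N) → Matrix (Fin n) (Fin (q i)) ℝ)
    (D : Matrix (Fin N × Fin n) ((i : Fin N) × Fin (q i)) ℝ)
    (hD : ∀ (pr : Fin N × Fin n) (s : (i : Fin N) × Fin (q i)),
      D pr s = if h : s.1 = pr.1 then X pr.1 pr.2 (Fin.cast (congrArg q h) s.2) else 0)
    (w : Fin n → ℝ) (hw : w ≠ 0)
    (c : (i : Fin N) → Fin (q i) → ℝ) (hc : ∀ i, (X i).mulVec (c i) = w)
    (v : ((i : Fin N) × Fin (q i)) → ℝ) (hv : ∀ s, v s = c s.1 s.2) :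
    v ≠ 0 ∧ (Dᵀ * (L ⊗ₖ (1 : Matrix (Fin n) (Fin n) ℝ)) * D).mulVec v = 0 := by
  have hcv : ∀ i, c i = fun k => v ⟨i, k⟩ := fun i => funext fun k => (hv ⟨i, k⟩).symm
  refine ⟨?_, ?_⟩
  · rintro rfl
    exact hw ((hc ⟨0, hN⟩).symm.trans (by rw [hcv]; exact mulVec_zero _))
  · have hDv : D *ᵥ v = fun p => (fun _ => (1 : ℝ)) p.1 * w p.2 := by
      simp [mulVec_eq_of_blockDiagonal_apply_s3 q X D hD, ← hcv, hc]
    rw [← mulVec_mulVec, ← mulVec_mulVec, hDv, kronecker_mulVec_mul L 1 (fun _ => 1) w,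
      (hker _).2 ⟨1, rfl⟩]
    simp only [Pi.zero_apply, zero_mul]
    exact mulVec_zero _

/-- 'Only if' direction of Lemma 1: if a nonzero vector `w` lies in every column
space `Im(X i)` (say `X i (c i) = w`), then the stacked vector of the `c i` is a
nonzero kernel vector of `Dᵀ (L ⊗ Iₙ) D`, which is therefore singular. -/
theorem stmt_3 {N n : ℕ} (hN : 0 < N) (q : Fin N → ℕ)
    (L : Matrix (Fin N) (Fin N) ℝ) (hLsymm : L.IsSymm) (hLpsd : L.PosSemidef)
    (hker : ∀ v : Fin N → ℝ, L.mulVec v = 0 ↔ ∃ c : ℝ, v = fun _ => c)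
    (X : (i : Fin N) → Matrix (Fin n) (Fin (q i)) ℝ)
    (hX : ∀ i, (X i)ᵀ * X i = 1)
    (D : Matrix (Fin N × Fin n) ((i : Fin N) × Fin (q i)) ℝ)
    (hD : ∀ (pr : Fin N × Fin n) (s : (i : Fin N) × Fin (q i)),
      D pr s = if h : s.1 = pr.1 then X pr.1 pr.2 (Fin.cast (congrArg q h) s.2) else 0)
    (w : Fin n → ℝ) (hw : w ≠ 0)
    (c : (i : Fin N) → Fin (q i) → ℝ) (hc : ∀ i, (X i).mulVec (c i) = w)
    (v : ((i : Fin N) × Fin (q i)) → ℝ) (hv : ∀ s, v s = c s.1 s.2) :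
    v ≠ 0 ∧ (Dᵀ * (L ⊗ₖ (1 : Matrix (Fin n) (Fin n) ℝ)) * D).mulVec v = 0 :=
  stmt_3_general hN q L hker X D hD w hw c hc v hv
end

section
/- Barbalat's lemma: If f : ℝ → ℝ is uniformly continuous on [0, ∞) and the limit lim_{t→∞} ∫₀ᵗ f(τ) dτ exists and is finite, then lim_{t→∞} f(t) = 0. -/
/-! Since `∫₀ᵗ f` converges, the integral of `f` over a window `[t, t + δ]` of fixed length
tends to zero. Uniform continuity makes `f` nearly constant on such a window once `δ` is small,
so `δ |f t|` is at most that window integral plus `δ ε / 2`, forcing `|f t| < ε` for large `t`. -/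

open Filter Topology MeasureTheory Set

theorem tendsto_intervalIntegral_add_const_atTop {f : ℝ → ℝ} {A : ℝ}
    (hloc : ∀ t, 0 ≤ t → IntervalIntegrable f volume 0 t)
    (hint : Tendsto (fun t => ∫ τ in (0:ℝ)..t, f τ) atTop (𝓝 A)) (h : ℝ) :
    Tendsto (fun t => ∫ τ in t..t + h, f τ) atTop (𝓝 0) := by
  have hshift : Tendsto (fun t => ∫ τ in (0:ℝ)..t + h, f τ) atTop (𝓝 A) :=
    hint.comp (tendsto_atTop_add_const_right _ h tendsto_id)
  have hdiff := hshift.sub hint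
  rw [sub_self] at hdiff
  refine hdiff.congr' ?_
  filter_upwards [eventually_ge_atTop 0, eventually_ge_atTop (-h)] with t ht hth
  exact intervalIntegral.integral_interval_sub_left (hloc _ (by linarith)) (hloc t ht)

theorem mul_abs_le_abs_intervalIntegral_add {f : ℝ → ℝ} {a b η : ℝ} (hab : a ≤ b)
    (hf : IntervalIntegrable f volume a b) (hclose : ∀ s ∈ Icc a b, |f s - f a| ≤ η) :
    (b - a) * |f a| ≤ |∫ s in a..b, f s| + (b - a) * η := by
  have hsplit : (b - a) * f a = (∫ s in a..b, f s) - ∫ s in a..b, (f s - f a) := by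
    rw [intervalIntegral.integral_sub hf intervalIntegrable_const,
      intervalIntegral.integral_const, smul_eq_mul]
    ring
  have hdev : |∫ s in a..b, (f s - f a)| ≤ η * |b - a| :=
    intervalIntegral.norm_integral_le_of_norm_le_const fun s hs =>
      (Real.norm_eq_abs _).trans_le
        (hclose s (Ioc_subset_Icc_self (by rwa [uIoc_of_le hab] at hs)))
  rw [abs_of_nonneg (sub_nonneg.mpr hab)] at hdev
  have := abs_sub (∫ s in a..b, f s) (∫ s in a..b, (f s - f a))
  rw [← hsplit, abs_mul, abs_of_nonneg (sub_nonneg.mpr hab)] at this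
  linarith

/-- Barbalat's lemma: if `f` is uniformly continuous on `[0, ∞)` and
`∫₀ᵗ f` converges to a finite limit as `t → ∞`, then `f(t) → 0`. -/
theorem stmt_4 (f : ℝ → ℝ) (hf : UniformContinuousOn f (Set.Ici 0))
    (A : ℝ)
    (hint : Filter.Tendsto (fun t => ∫ τ in (0:ℝ)..t, f τ) Filter.atTop (nhds A)) :
    Filter.Tendsto f Filter.atTop (nhds 0) := by
  have hloc (a b : ℝ) (ha : 0 ≤ a) (hb : 0 ≤ b) : IntervalIntegrable f volume a b :=
    (hf.continuousOn.mono fun s hs => le_trans (le_min ha hb) hs.1).intervalIntegrable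
  rw [Metric.tendsto_nhds]
  intro ε hε
  obtain ⟨δ, hδ, hclose⟩ := Metric.uniformContinuousOn_iff_le.mp hf (ε / 2) (by positivity)
  have hwindow := Metric.tendsto_nhds.mp
    (tendsto_intervalIntegral_add_const_atTop (fun t => hloc 0 t le_rfl) hint δ)
    (δ * (ε / 2)) (by positivity)
  filter_upwards [hwindow, eventually_ge_atTop 0] with t hsmall ht
  have hbound := mul_abs_le_abs_intervalIntegral_add (f := f) (η := ε / 2)
    (le_add_of_nonneg_right hδ.le) (hloc t (t + δ) ht (by linarith)) fun s hs => by
      have hst : dist s t ≤ δ := by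
        rw [Real.dist_eq, abs_of_nonneg] <;> linarith [hs.1, hs.2]
      simpa only [Real.dist_eq] using hclose s (ht.trans hs.1) t ht hst
  rw [Real.dist_eq, sub_zero] at hsmall ⊢
  rw [add_sub_cancel_left] at hbound
  exact lt_of_mul_lt_mul_left (by linarith) hδ.le
end

section
/- Let β ≥ 0, ε > 0, P symmetric, Bⁱ a matrix, x̂ ∈ ℝ^n, and define ωⁱ = (Bⁱ)ᵀ P x̂ and h_ε as the boundary-layer function (h_ε(ω) = ω/‖ω‖ if β‖ω‖ > ε, (β/ε)ω otherwise). Then −x̂ᵀ P Bⁱ β h_ε(ωⁱ) ≤ −β‖x̂ᵀ P Bⁱ‖ + ε/4. -/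
open Matrix

/-!
Write `ω = (Bⁱ)ᵀ P x̂`; by symmetry of `P` this is also the row vector `x̂ᵀ P Bⁱ`, so the left side
is `-β ω ⬝ h_ε(ω)`. Outside the boundary layer `β ω ⬝ h_ε(ω) = β‖ω‖` exactly. Inside it equals
`t² / ε` with `t = β‖ω‖`, and `t - ε/4 ≤ t² / ε` is `0 ≤ (t - ε/2)²`.
-/

noncomputable def boundaryLayer {ι : Type*} [Fintype ι] (β ε : ℝ) (w : ι → ℝ) : ι → ℝ :=
  if ε < β * √(∑ j, w j ^ 2) then (√(∑ j, w j ^ 2))⁻¹ • w else (β / ε) • w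

theorem vecMul_mul_eq_mulVec_of_isSymm {m k : Type*} [Fintype m] {P : Matrix m m ℝ}
    (hP : P.IsSymm) (B : Matrix m k ℝ) (x : m → ℝ) : x ᵥ* (P * B) = (Bᵀ * P) *ᵥ x := by
  rw [← mulVec_transpose, transpose_mul, hP.eq]

theorem dotProduct_smul_self {ι : Type*} [Fintype ι] (c : ℝ) (w : ι → ℝ) :
    w ⬝ᵥ (c • w) = c * ∑ j, w j ^ 2 := by
  simp only [dotProduct, Pi.smul_apply, smul_eq_mul, Finset.mul_sum]
  exact Finset.sum_congr rfl fun j _ => by ring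

theorem sub_div_four_le_sq_div {ε : ℝ} (hε : 0 < ε) (t : ℝ) : t - ε / 4 ≤ t ^ 2 / ε := by
  rw [le_div_iff₀ hε]
  nlinarith [sq_nonneg (t - ε / 2)]

theorem sub_div_four_le_dotProduct_boundaryLayer {ι : Type*} [Fintype ι] (β : ℝ) {ε : ℝ}
    (hε : 0 < ε) (w : ι → ℝ) :
    β * √(∑ j, w j ^ 2) - ε / 4 ≤ w ⬝ᵥ (β • boundaryLayer β ε w) := by
  unfold boundaryLayer
  set s := √(∑ j, w j ^ 2)
  have hs : s ^ 2 = ∑ j, w j ^ 2 := Real.sq_sqrt (by positivity)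
  clear_value s
  split_ifs
  · have hlayer : s⁻¹ * s ^ 2 = s := by
      rcases eq_or_ne s 0 with h0 | h0
      · simp [h0]
      · field_simp
    rw [smul_smul, dotProduct_smul_self, ← hs, mul_assoc, hlayer]
    linarith
  · rw [smul_smul, dotProduct_smul_self, ← hs]
    calc β * s - ε / 4 ≤ (β * s) ^ 2 / ε := sub_div_four_le_sq_div hε _
      _ = β * (β / ε) * s ^ 2 := by ring

theorem stmt_18_general {n b : ℕ} (β ε : ℝ) (hε : 0 < ε)
    (P : Matrix (Fin n) (Fin n) ℝ) (hP : P.IsSymm)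
    (Bi : Matrix (Fin n) (Fin b) ℝ) (xhat : Fin n → ℝ)
    (heps : (Fin b → ℝ) → (Fin b → ℝ))
    (hh : ∀ w : Fin b → ℝ, heps w =
      if ε < β * Real.sqrt (∑ j, w j ^ 2)
      then (Real.sqrt (∑ j, w j ^ 2))⁻¹ • w
      else (β / ε) • w)
    (ω : Fin b → ℝ) (hω : ω = (Biᵀ * P).mulVec xhat) :
    -(Matrix.vecMul xhat (P * Bi) ⬝ᵥ (β • heps ω))
      ≤ -(β * Real.sqrt (∑ j, (Matrix.vecMul xhat (P * Bi)) j ^ 2)) + ε / 4 := by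
  have hheps : heps = boundaryLayer β ε := funext hh
  rw [vecMul_mul_eq_mulVec_of_isSymm hP, ← hω, hheps]
  linarith [sub_div_four_le_dotProduct_boundaryLayer β hε ω]

/-- Inequality (41): the boundary-layered sliding-mode term driven by the
estimate `x̂`, with `ωⁱ = (Bⁱ)ᵀPx̂`, satisfies
`−x̂ᵀ P Bⁱ β h_ε(ωⁱ) ≤ −β‖x̂ᵀPBⁱ‖ + ε/4`. -/
theorem stmt_18 {n b : ℕ} (β ε : ℝ) (hβ : 0 ≤ β) (hε : 0 < ε)
    (P : Matrix (Fin n) (Fin n) ℝ) (hP : P.IsSymm)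
    (Bi : Matrix (Fin n) (Fin b) ℝ) (xhat : Fin n → ℝ)
    (heps : (Fin b → ℝ) → (Fin b → ℝ))
    (hh : ∀ w : Fin b → ℝ, heps w =
      if ε < β * Real.sqrt (∑ j, w j ^ 2)
      then (Real.sqrt (∑ j, w j ^ 2))⁻¹ • w
      else (β / ε) • w)
    (ω : Fin b → ℝ) (hω : ω = (Biᵀ * P).mulVec xhat) :
    -(Matrix.vecMul xhat (P * Bi) ⬝ᵥ (β • heps ω))
      ≤ -(β * Real.sqrt (∑ j, (Matrix.vecMul xhat (P * Bi)) j ^ 2)) + ε / 4 :=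
  stmt_18_general β ε hε P hP Bi xhat heps hh ω hω
end
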